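/- arXiv:1807.05257 — 4 statements merged into one kernel-verified Lean document; each statement's English description precedes it below -/
import Mathlib

section
/- The function h(t) = (1 - e^{-at})/(1 - e^{-t}) is strictly increasing on (0, ∞) for every fixed a in (0,1). -/
/-!
Substituting `x = e^{-t}`, which decreases from `1` to `0` as `t` runs over `(0, ∞)`, turns the
function into `(1 - x^a) / (1 - x)`: the slope of the secant of `x ↦ x^a` between `x` and `1`.
Since `x ↦ x^a` is strictly concave for `0 < a < 1`, this slope strictly decreases in `x`.
-/

open Real Set

lemma StrictConcaveOn.secant_strictAntiOn {𝕜 : Type*} [Field 𝕜] [LinearOrder 𝕜]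
    [IsStrictOrderedRing 𝕜] {s : Set 𝕜} {f : 𝕜 → 𝕜} (hf : StrictConcaveOn 𝕜 s f) {c : 𝕜}
    (hc : c ∈ s) :
    StrictAntiOn (fun x => (f c - f x) / (c - x)) (s \ {c}) := by
  rintro x ⟨hxs, hxc⟩ y ⟨hys, hyc⟩ hxy
  have h := hf.secant_strict_mono hc hxs hys hxc hyc hxy
  rwa [← neg_div_neg_eq, neg_sub, neg_sub, ← neg_div_neg_eq (f x - f c), neg_sub, neg_sub] at h

lemma rpow_secant_one_strictAntiOn {p : ℝ} (hp₀ : 0 < p) (hp₁ : p < 1) :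
    StrictAntiOn (fun x : ℝ => (1 - x ^ p) / (1 - x)) (Ici 0 \ {1}) := by
  simpa only [one_rpow] using
    (strictConcaveOn_rpow hp₀ hp₁).secant_strictAntiOn (mem_Ici.2 zero_le_one)

theorem stmt_1 (a : ℝ) (ha : a ∈ Set.Ioo (0:ℝ) 1) :
    StrictMonoOn (fun t : ℝ => (1 - Real.exp (-a * t)) / (1 - Real.exp (-t)))
      (Set.Ioi 0) := by
  have hexp : StrictAntiOn (fun t : ℝ => exp (-t)) (Ioi 0) :=
    fun s _ t _ hst => exp_lt_exp.2 (neg_lt_neg hst)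
  have hmaps : MapsTo (fun t : ℝ => exp (-t)) (Ioi 0) (Ici 0 \ {1}) :=
    fun t ht => ⟨(exp_pos _).le, (exp_lt_one_iff.2 (neg_lt_zero.2 ht)).ne⟩
  have h := (rpow_secant_one_strictAntiOn ha.1 ha.2).comp hexp hmaps
  convert h using 2 with t
  simp only [Function.comp, ← exp_mul, neg_mul, mul_comm a]
end

section
/- For every a in (0,1), the function f_a(x) = ψ(x+a) - ψ(x) - a/x is strictly completely monotonic on (0, ∞), i.e., (-1)ⁿ f_a⁽ⁿ⁾(x) > 0 for all x > 0 and all nonnegative integers n. -/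
noncomputable def digamma : ℝ → ℝ := deriv (fun x => Real.log (Real.Gamma x))

/-!
From `ψ(x + 1) = ψ(x) + 1/x` one gets `f_a(x) - f_a(x + 1) = h(x)` with
`h(x) = (1 - a)/x + a/(x + 1) - 1/(x + a)`, and `f_a(x + N) → 0` because `ψ` is monotone
(`log Γ` is convex), so `f_a(x) = ∑ₖ h(x + k)`. The series may be differentiated termwise, and
`(-1)ⁿ h⁽ⁿ⁾(x) = n! ((1 - a) x^{-(n+1)} + a (x + 1)^{-(n+1)} - (x + a)^{-(n+1)})`, which is
positive by strict convexity of `t ↦ t^{-(n+1)}`, since `x + a = (1 - a) x + a (x + 1)`.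
-/

open Real Set Filter Topology Nat

section Digamma

lemma differentiableAt_log_Gamma_of_pos {x : ℝ} (hx : 0 < x) :
    DifferentiableAt ℝ (fun t => log (Gamma t)) x :=
  (differentiableAt_Gamma fun m => ((neg_nonpos.2 m.cast_nonneg).trans_lt hx).ne').log
    (Gamma_pos_of_pos hx).ne'

lemma digamma_add_one {x : ℝ} (hx : 0 < x) : digamma (x + 1) = digamma x + x⁻¹ := by
  unfold digamma
  rw [← deriv_comp_add_const, ← deriv_log,
    ← deriv_add (differentiableAt_log_Gamma_of_pos hx) (differentiableAt_log hx.ne')]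
  refine Filter.EventuallyEq.deriv_eq ?_
  filter_upwards [eventually_gt_nhds hx] with y hy
  rw [Pi.add_apply, Gamma_add_one hy.ne', log_mul hy.ne' (Gamma_pos_of_pos hy).ne', add_comm]

lemma digamma_monotoneOn : MonotoneOn digamma (Ioi 0) :=
  convexOn_log_Gamma.monotoneOn_deriv fun _ hx => differentiableAt_log_Gamma_of_pos hx

end Digamma

section JensenGap

variable {a x : ℝ}

noncomputable def jensenGap (a : ℝ) (m : ℕ) (x : ℝ) : ℝ :=
  (1 - a) * (x ^ m)⁻¹ + a * ((x + 1) ^ m)⁻¹ - ((x + a) ^ m)⁻¹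

lemma jensenGap_pos (ha : a ∈ Ioo 0 1) (hx : 0 < x) {m : ℕ} (hm : m ≠ 0) :
    0 < jensenGap a m x := by
  have hconv := strictConvexOn_zpow (m := -(m : ℤ)) (by omega) (by omega)
  have h := hconv.2 (mem_Ioi.2 hx) (mem_Ioi.2 (by linarith : (0 : ℝ) < x + 1)) (by linarith)
    (sub_pos.2 ha.2) ha.1 (by ring)
  simp only [smul_eq_mul, zpow_neg, zpow_natCast] at h
  rw [show (1 - a) * x + a * (x + 1) = x + a by ring] at h
  rw [jensenGap]
  linarith

lemma jensenGap_le (ha : a ∈ Icc 0 1) (hx : 0 < x) (m : ℕ) : jensenGap a m x ≤ (x ^ m)⁻¹ := by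
  have h1 : ((x + 1) ^ m)⁻¹ ≤ (x ^ m)⁻¹ :=
    inv_anti₀ (by positivity) (pow_le_pow_left₀ hx.le (by linarith) m)
  have ha' : 0 ≤ ((x + a) ^ m)⁻¹ := inv_nonneg.2 (pow_nonneg (by linarith [ha.1]) m)
  rw [jensenGap]
  nlinarith [ha.1, ha.2]

lemma hasDerivAt_inv_pow_add {c : ℝ} (hc : x + c ≠ 0) (m : ℕ) :
    HasDerivAt (fun y => ((y + c) ^ m)⁻¹) (-m * ((x + c) ^ (m + 1))⁻¹) x := by
  have h := (((hasDerivAt_id x).add_const c).fun_pow m).inv (pow_ne_zero m hc)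
  refine h.congr_deriv ?_
  rcases m with _ | m
  · simp
  · field_simp
    simp only [id, add_tsub_cancel_right]
    ring

lemma hasDerivAt_jensenGap (ha : 0 ≤ a) (hx : 0 < x) (m : ℕ) :
    HasDerivAt (jensenGap a m) (-m * jensenGap a (m + 1) x) x := by
  have h0 := hasDerivAt_inv_pow_add (c := 0) (by simpa using hx.ne') m
  have h1 := hasDerivAt_inv_pow_add (c := 1) (x := x) (by positivity) m
  have ha := hasDerivAt_inv_pow_add (c := a) (x := x) (by positivity) m
  simp only [add_zero] at h0
  refine (((h0.const_mul (1 - a)).add (h1.const_mul a)).sub ha).congr_deriv ?_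
  simp only [jensenGap]
  ring

end JensenGap

section GapTerm

variable {a x : ℝ}

/-- `gapTerm a n` is the `n`-th derivative of `h(x) = f_a(x) - f_a(x + 1)
= (1 - a)/x + a/(x + 1) - 1/(x + a)`. -/
noncomputable def gapTerm (a : ℝ) (n : ℕ) (x : ℝ) : ℝ :=
  (-1) ^ n * (n ! : ℝ) * jensenGap a (n + 1) x

lemma hasDerivAt_gapTerm (ha : 0 ≤ a) (hx : 0 < x) (n : ℕ) :
    HasDerivAt (gapTerm a n) (gapTerm a (n + 1) x) x := by
  refine ((hasDerivAt_jensenGap ha hx (n + 1)).const_mul ((-1) ^ n * (n ! : ℝ))).congr_deriv ?_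
  simp only [gapTerm, factorial_succ]
  push_cast
  ring

lemma neg_one_pow_mul_gapTerm (n : ℕ) :
    (-1 : ℝ) ^ n * gapTerm a n x = n ! * jensenGap a (n + 1) x := by
  rw [gapTerm, ← mul_assoc, ← mul_assoc, ← pow_add, Even.neg_one_pow ⟨n, rfl⟩, one_mul]

lemma neg_one_pow_mul_gapTerm_pos (ha : a ∈ Ioo 0 1) (hx : 0 < x) (n : ℕ) :
    0 < (-1 : ℝ) ^ n * gapTerm a n x := by
  rw [neg_one_pow_mul_gapTerm]
  exact mul_pos (by positivity) (jensenGap_pos ha hx n.succ_ne_zero)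

lemma abs_gapTerm_le (ha : a ∈ Ioo 0 1) (hx : 0 < x) (n : ℕ) :
    |gapTerm a n x| ≤ n ! * (x ^ (n + 1))⁻¹ := by
  rw [gapTerm, abs_mul, abs_mul, abs_pow, abs_neg, abs_one, one_pow, one_mul, Nat.abs_cast,
    abs_of_pos (jensenGap_pos ha hx n.succ_ne_zero)]
  exact mul_le_mul_of_nonneg_left (jensenGap_le (Ioo_subset_Icc_self ha) hx _) (by positivity)

end GapTerm

section ShiftedSeries

lemma summable_inv_add_pow {c : ℝ} (hc : 0 < c) {m : ℕ} (hm : 2 ≤ m) :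
    Summable fun k : ℕ => ((c + k) ^ m)⁻¹ := by
  refine ((Real.summable_one_div_nat_add_rpow c m).2 (by exact_mod_cast hm)).congr fun k => ?_
  rw [abs_of_pos (by positivity), rpow_natCast, one_div, add_comm]

variable {H : ℕ → ℝ → ℝ}

lemma summable_shift (hbound : ∀ n, ∃ C, ∀ y, 0 < y → |H (n + 1) y| ≤ C * (y ^ (n + 2))⁻¹)
    (hsum : ∀ x, 0 < x → Summable fun k : ℕ => H 0 (x + k)) (n : ℕ) {x : ℝ} (hx : 0 < x) :
    Summable fun k : ℕ => H n (x + k) := by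
  rcases n with _ | n
  · exact hsum x hx
  obtain ⟨C, hC⟩ := hbound n
  refine ((summable_inv_add_pow hx (by omega : 2 ≤ n + 2)).mul_left C).of_norm_bounded fun k => ?_
  exact hC _ (by positivity)

lemma hasDerivAt_tsum_shift (hH : ∀ n y, 0 < y → HasDerivAt (H n) (H (n + 1) y) y)
    (hbound : ∀ n, ∃ C, ∀ y, 0 < y → |H (n + 1) y| ≤ C * (y ^ (n + 2))⁻¹)
    (hsum : ∀ x, 0 < x → Summable fun k : ℕ => H 0 (x + k)) (n : ℕ) {x : ℝ} (hx : 0 < x) :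
    HasDerivAt (fun y => ∑' k : ℕ, H n (y + k)) (∑' k : ℕ, H (n + 1) (x + k)) x := by
  obtain ⟨C, hC⟩ := hbound n
  have hC0 : 0 ≤ C := by simpa using (abs_nonneg _).trans (hC 1 one_pos)
  have hx2 : x / 2 ∈ Ioi 0 := half_pos hx
  refine hasDerivAt_tsum_of_isPreconnected
    ((summable_inv_add_pow hx2 (by omega : 2 ≤ n + 2)).mul_left C) isOpen_Ioi isPreconnected_Ioi
    (fun k y hy => (hH n (y + k) (by linarith [hx2.out.trans hy.out, k.cast_nonneg (α := ℝ)]))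
      |>.comp_add_const y k) (fun k y hy => ?_)
    (half_lt_self hx) (summable_shift hbound hsum n hx) (half_lt_self hx)
  have hy : x / 2 < y := hy
  have hy0 : 0 < y := hx2.out.trans hy
  refine (hC _ (by positivity)).trans (mul_le_mul_of_nonneg_left ?_ hC0)
  exact inv_anti₀ (by positivity) (pow_le_pow_left₀ (by positivity) (by linarith) _)

lemma iterate_deriv_eq_tsum_shift (hH : ∀ n y, 0 < y → HasDerivAt (H n) (H (n + 1) y) y)
    (hbound : ∀ n, ∃ C, ∀ y, 0 < y → |H (n + 1) y| ≤ C * (y ^ (n + 2))⁻¹)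
    (hsum : ∀ x, 0 < x → Summable fun k : ℕ => H 0 (x + k)) {F : ℝ → ℝ}
    (hF : ∀ x, 0 < x → F x = ∑' k : ℕ, H 0 (x + k)) (n : ℕ) :
    ∀ x, 0 < x → deriv^[n] F x = ∑' k : ℕ, H n (x + k) := by
  induction n with
  | zero => exact hF
  | succ n ih =>
    intro x hx
    have heq : deriv^[n] F =ᶠ[𝓝 x] fun y => ∑' k : ℕ, H n (y + k) :=
      eventually_of_mem (Ioi_mem_nhds hx) ih
    rw [Function.iterate_succ_apply', heq.deriv_eq,
      (hasDerivAt_tsum_shift hH hbound hsum n hx).deriv]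

end ShiftedSeries

section DigammaGap

variable {a x : ℝ}

noncomputable def digammaGap (a x : ℝ) : ℝ := digamma (x + a) - digamma x - a / x

lemma digammaGap_sub_digammaGap_add_one (ha : 0 ≤ a) (hx : 0 < x) :
    digammaGap a x - digammaGap a (x + 1) = gapTerm a 0 x := by
  have hxa : 0 < x + a := by linarith
  simp only [digammaGap, gapTerm, jensenGap, zero_add, pow_one, pow_zero, factorial_zero,
    cast_one, one_mul]
  rw [add_right_comm, digamma_add_one hxa, digamma_add_one hx]
  field_simp
  ring

lemma abs_digammaGap_le (ha : a ∈ Icc 0 1) (hx : 0 < x) : |digammaGap a x| ≤ x⁻¹ := by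
  have hlo : digamma x ≤ digamma (x + a) :=
    digamma_monotoneOn hx (by simp; linarith [ha.1]) (by linarith [ha.1])
  have hhi : digamma (x + a) ≤ digamma x + x⁻¹ :=
    digamma_add_one hx ▸ digamma_monotoneOn (by simp; linarith [ha.1]) (by simp; linarith)
      (by linarith [ha.2])
  have hax : a / x ≤ x⁻¹ := by
    rw [div_eq_mul_inv]; exact mul_le_of_le_one_left (by positivity) ha.2
  rw [abs_le, digammaGap]
  constructor <;> linarith [div_nonneg ha.1 hx.le]

lemma tendsto_digammaGap_atTop (ha : a ∈ Icc 0 1) : Tendsto (digammaGap a) atTop (𝓝 0) :=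
  squeeze_zero_norm' (eventually_gt_atTop 0 |>.mono fun _ hx => abs_digammaGap_le ha hx)
    tendsto_inv_atTop_zero

lemma hasSum_gapTerm (ha : a ∈ Ioo 0 1) (hx : 0 < x) :
    HasSum (fun k : ℕ => gapTerm a 0 (x + k)) (digammaGap a x) := by
  have hxk : ∀ k : ℕ, 0 < x + k := fun k => by positivity
  rw [hasSum_iff_tendsto_nat_of_nonneg fun k => by
    simpa using (neg_one_pow_mul_gapTerm_pos ha (hxk k) 0).le]
  have hlim : Tendsto (fun N : ℕ => digammaGap a x - digammaGap a (x + N)) atTop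
      (𝓝 (digammaGap a x - 0)) :=
    tendsto_const_nhds.sub <| (tendsto_digammaGap_atTop (Ioo_subset_Icc_self ha)).comp <|
      tendsto_atTop_add_const_left _ x tendsto_natCast_atTop_atTop
  rw [sub_zero] at hlim
  refine hlim.congr fun N => ?_
  have := Finset.sum_range_sub' (fun k : ℕ => digammaGap a (x + k)) N
  simp only [cast_zero, add_zero, cast_succ, ← add_assoc] at this
  rw [← this]
  exact Finset.sum_congr rfl fun k _ => digammaGap_sub_digammaGap_add_one ha.1.le (hxk k)

end DigammaGap

theorem stmt_8 (a : ℝ) (ha : a ∈ Set.Ioo (0:ℝ) 1) (n : ℕ) (x : ℝ) (hx : 0 < x) :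
    0 < (-1) ^ n *
      deriv^[n] (fun y : ℝ => digamma (y + a) - digamma y - a / y) x := by
  have hderiv : ∀ n y, 0 < y → HasDerivAt (gapTerm a n) (gapTerm a (n + 1) y) y :=
    fun n y hy => hasDerivAt_gapTerm ha.1.le hy n
  have hbound : ∀ n, ∃ C, ∀ y, 0 < y → |gapTerm a (n + 1) y| ≤ C * (y ^ (n + 2))⁻¹ :=
    fun n => ⟨_, fun y hy => abs_gapTerm_le ha hy (n + 1)⟩
  have hsum : ∀ y, 0 < y → Summable fun k : ℕ => gapTerm a 0 (y + k) :=
    fun y hy => (hasSum_gapTerm ha hy).summable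
  have hpos : ∀ k : ℕ, 0 < (-1) ^ n * gapTerm a n (x + k) :=
    fun k => neg_one_pow_mul_gapTerm_pos ha (by positivity) n
  change 0 < (-1) ^ n * deriv^[n] (digammaGap a) x
  rw [iterate_deriv_eq_tsum_shift hderiv hbound hsum
    (fun y hy => (hasSum_gapTerm ha hy).tsum_eq.symm) n x hx, ← tsum_mul_left]
  exact ((summable_shift hbound hsum n hx).mul_left _).tsum_pos (fun k => (hpos k).le) 0 (hpos 0)
end

section
/- For every a in (0,1) and every even nonnegative integer k, the function f_{a,k}(x) = ψ⁽ᵏ⁾(x+a) - ψ⁽ᵏ⁾(x) - a·k!/x^{k+1} is strictly decreasing on (0, ∞). -/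
noncomputable def polygamma (n : ℕ) : ℝ → ℝ := deriv^[n] digamma

/-!
Differentiating Gauss' product for `log Γ` termwise gives `ψ⁽ᵏ⁾' = (-1)ᵏ (k+1)! ζ(k+2, ·)`,
so for even `k` the derivative of `f_{a,k}` at `y` is `(k+1)!` times
`ζ(m, y+a) - ζ(m, y) + a y⁻ᵐ` with `m = k+2`. Since `ζ(m, y) = y⁻ᵐ + ζ(m, y+1)`, this is negative
exactly when `ζ(m, y+a) < (1-a) ζ(m, y) + a ζ(m, y+1)`, which holds term by term because
`t ↦ t⁻ᵐ` is strictly convex.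
-/

open Filter Topology Set

-- `ζ(m, x)` for real `x > 0`; Mathlib's `hurwitzZeta` only takes parameters modulo `1`.
noncomputable def hurwitzSeries (m : ℕ) (x : ℝ) : ℝ := ∑' n : ℕ, ((x + n) ^ m)⁻¹

theorem summable_inv_add_nat_pow (x : ℝ) {m : ℕ} (hm : 1 < m) :
    Summable fun n : ℕ => ((x + n) ^ m)⁻¹ := by
  refine .of_norm <| ((Real.summable_one_div_nat_add_rpow x m).mpr (by exact_mod_cast hm)).congr
    fun n => ?_
  rw [norm_inv, norm_pow, Real.norm_eq_abs, add_comm, Real.rpow_natCast, one_div]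

theorem hurwitzSeries_eq_inv_pow_add {m : ℕ} (hm : 1 < m) (x : ℝ) :
    hurwitzSeries m x = (x ^ m)⁻¹ + hurwitzSeries m (x + 1) := by
  rw [hurwitzSeries, (summable_inv_add_nat_pow x hm).tsum_eq_zero_add, hurwitzSeries]
  congr 1
  · simp
  · exact tsum_congr fun n => by push_cast; ring_nf

theorem hasDerivAt_inv_pow (m : ℕ) {x : ℝ} (hx : x ≠ 0) :
    HasDerivAt (fun y => (y ^ m)⁻¹) (-m * (x ^ (m + 1))⁻¹) x := by
  have h := hasDerivAt_zpow (-(m : ℤ)) x (Or.inl hx)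
  rw [show -(m : ℤ) - 1 = -((m + 1 : ℕ) : ℤ) by push_cast; ring] at h
  simpa only [zpow_neg, zpow_natCast, Int.cast_neg, Int.cast_natCast] using h

theorem hasDerivAt_hurwitzSeries {m : ℕ} (hm : 1 < m) {x : ℝ} (hx : 0 < x) :
    HasDerivAt (hurwitzSeries m) (-m * hurwitzSeries (m + 1) x) x := by
  have hpos : ∀ (n : ℕ) (y : ℝ), y ∈ Ioi (x / 2) → 0 < y + n := fun n y hy => by
    have : 0 < y := (half_pos hx).trans hy
    positivity
  have hterm : ∀ (n : ℕ) (y : ℝ), y ∈ Ioi (x / 2) →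
      HasDerivAt (fun z : ℝ => ((z + n) ^ m)⁻¹) (-m * ((y + n) ^ (m + 1))⁻¹) y := fun n y hy =>
    (hasDerivAt_inv_pow m (hpos n y hy).ne').comp_add_const y n
  have hbound : ∀ (n : ℕ) (y : ℝ), y ∈ Ioi (x / 2) →
      ‖-(m : ℝ) * ((y + n) ^ (m + 1))⁻¹‖ ≤ m * ((x / 2 + n) ^ (m + 1))⁻¹ := fun n y hy => by
    rw [norm_mul, norm_neg, Real.norm_natCast, norm_inv, norm_pow,
      Real.norm_of_nonneg (hpos n y hy).le]
    have : x / 2 ≤ y := le_of_lt hy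
    gcongr
  have h := hasDerivAt_tsum_of_isPreconnected
    ((summable_inv_add_nat_pow (x / 2) (by omega)).mul_left (m : ℝ)) isOpen_Ioi isPreconnected_Ioi
    hterm hbound (half_lt_self hx) (summable_inv_add_nat_pow x hm) (half_lt_self hx)
  rwa [tsum_mul_left] at h

theorem inv_pow_add_lt {m : ℕ} (hm : m ≠ 0) {t a : ℝ} (ht : 0 < t) (ha : a ∈ Ioo (0 : ℝ) 1) :
    ((t + a) ^ m)⁻¹ < (1 - a) * (t ^ m)⁻¹ + a * ((t + 1) ^ m)⁻¹ := by
  have h := (strictConvexOn_zpow (m := -(m : ℤ)) (by omega) (by omega)).2 (x := t) (y := t + 1)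
    ht (by simp only [mem_Ioi]; linarith) (by linarith) (sub_pos.2 ha.2) ha.1 (by ring)
  simp only [smul_eq_mul, zpow_neg, zpow_natCast] at h
  rwa [show (1 - a) * t + a * (t + 1) = t + a by ring] at h

theorem hurwitzSeries_add_lt {m : ℕ} (hm : 1 < m) {y a : ℝ} (hy : 0 < y)
    (ha : a ∈ Ioo (0 : ℝ) 1) :
    hurwitzSeries m (y + a) < (1 - a) * hurwitzSeries m y + a * hurwitzSeries m (y + 1) := by
  have hterm (n : ℕ) :
      ((y + a + n) ^ m)⁻¹ < (1 - a) * ((y + n) ^ m)⁻¹ + a * ((y + 1 + n) ^ m)⁻¹ := by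
    convert inv_pow_add_lt (m := m) (by omega) (t := y + n) (by positivity) ha using 3 <;> ring
  have hS (z : ℝ) := summable_inv_add_nat_pow z hm
  rw [hurwitzSeries, hurwitzSeries, hurwitzSeries, ← tsum_mul_left, ← tsum_mul_left,
    ← ((hS y).mul_left _).tsum_add ((hS (y + 1)).mul_left _)]
  exact (hS (y + a)).tsum_lt_tsum (fun n => (hterm n).le) (hterm 0)
    (((hS y).mul_left _).add ((hS (y + 1)).mul_left _))

theorem mul_inv_pow_lt_hurwitzSeries_sub {m : ℕ} (hm : 1 < m) {y a : ℝ} (hy : 0 < y)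
    (ha : a ∈ Ioo (0 : ℝ) 1) :
    a * (y ^ m)⁻¹ < hurwitzSeries m y - hurwitzSeries m (y + a) := by
  have hlt := hurwitzSeries_add_lt hm hy ha
  have hshift : (1 - a) * hurwitzSeries m y + a * hurwitzSeries m (y + 1)
      = hurwitzSeries m y - a * (y ^ m)⁻¹ := by
    rw [hurwitzSeries_eq_inv_pow_add hm y]; ring
  linarith

theorem hasDerivAt_logGammaSeq (n : ℕ) {x : ℝ} (hx : 0 < x) :
    HasDerivAt (fun y => Real.BohrMollerup.logGammaSeq y n)
      (Real.log n - ∑ j ∈ Finset.range (n + 1), (x + j)⁻¹) x := by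
  have hlog (j : ℕ) : HasDerivAt (fun y => Real.log (y + j)) (x + j)⁻¹ x := by
    simpa using ((hasDerivAt_id x).add_const (j : ℝ)).log (by positivity)
  exact ((hasDerivAt_mul_const _).add_const _).sub (HasDerivAt.fun_sum fun j _ => hlog j)

theorem tendsto_log_sub_sum_range_succ_inv :
    Tendsto (fun n : ℕ => Real.log n - ∑ j ∈ Finset.range (n + 1), ((j : ℝ) + 1)⁻¹) atTop
      (𝓝 (-Real.eulerMascheroniConstant)) := by
  have h := ((Real.tendsto_harmonic_sub_log.comp (tendsto_add_atTop_nat 1)).add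
    Real.tendsto_log_nat_add_one_sub_log).neg
  rw [add_zero] at h
  refine h.congr fun n => ?_
  simp only [Function.comp_apply, harmonic, Rat.cast_sum, Rat.cast_inv, Rat.cast_natCast]
  push_cast
  ring

theorem inv_add_one_sub_inv_add_eq (j : ℕ) {y : ℝ} (hy : 0 < y) :
    ((j : ℝ) + 1)⁻¹ - (y + j)⁻¹ = (y - 1) / ((j + 1) * (y + j)) := by
  field_simp
  ring

theorem tendstoUniformlyOn_sum_inv_add_one_sub_inv {δ R : ℝ} (hδ : 0 < δ) (hδ1 : δ ≤ 1) :
    TendstoUniformlyOn (fun N (y : ℝ) => ∑ j ∈ Finset.range N, (((j : ℝ) + 1)⁻¹ - (y + j)⁻¹))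
      (fun y : ℝ => ∑' j : ℕ, (((j : ℝ) + 1)⁻¹ - (y + j)⁻¹)) atTop (Ioo δ R) := by
  refine tendstoUniformlyOn_tsum_nat ((summable_inv_add_nat_pow δ one_lt_two).mul_left (R + 1))
    fun j y ⟨hδy, hyR⟩ => ?_
  have hy : 0 < y := hδ.trans hδy
  have hden : (δ + j) ^ 2 ≤ (j + 1) * (y + j) := by
    rw [sq]
    exact mul_le_mul (by linarith) (by linarith) (by positivity) (by positivity)
  rw [Real.norm_eq_abs, inv_add_one_sub_inv_add_eq j hy, abs_div,
    abs_of_pos (by positivity : (0 : ℝ) < (j + 1) * (y + j)), ← div_eq_mul_inv]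
  exact div_le_div₀ (by linarith) (abs_le.2 ⟨by linarith, by linarith⟩) (by positivity) hden

theorem digamma_eq_tsum {x : ℝ} (hx : 0 < x) :
    digamma x = -Real.eulerMascheroniConstant + ∑' j : ℕ, (((j : ℝ) + 1)⁻¹ - (x + j)⁻¹) := by
  obtain ⟨δ, hδ, hδ1, hδx⟩ : ∃ δ, 0 < δ ∧ δ < 1 ∧ δ < x :=
    ⟨min x 1 / 2, by positivity, by linarith [min_le_right x 1], by linarith [min_le_left x 1]⟩
  have hsum := tendstoUniformlyOn_sum_inv_add_one_sub_inv (R := x + 1) hδ hδ1.le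
  have hunif : TendstoUniformlyOn
      (fun (n : ℕ) (y : ℝ) => Real.log n - ∑ j ∈ Finset.range (n + 1), (y + j)⁻¹)
      (fun y : ℝ => -Real.eulerMascheroniConstant + ∑' j : ℕ, (((j : ℝ) + 1)⁻¹ - (y + j)⁻¹))
      atTop (Ioo δ (x + 1)) := by
    refine ((tendsto_log_sub_sum_range_succ_inv.tendstoUniformlyOn_const _).add
      fun u hu => (tendsto_add_atTop_nat 1).eventually (hsum u hu)).congr ?_
    filter_upwards with n y _
    simp only [Pi.add_apply, Finset.sum_sub_distrib]
    ring
  exact (hasDerivAt_of_tendstoUniformlyOn (f := fun n y => Real.BohrMollerup.logGammaSeq y n)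
    isOpen_Ioo hunif
    (Eventually.of_forall fun n y hy => hasDerivAt_logGammaSeq n (hδ.trans hy.1))
    (fun y hy => Real.BohrMollerup.tendsto_log_gamma (hδ.trans hy.1))
    ⟨hδx, by linarith⟩).deriv

theorem hasDerivAt_tsum_inv_add_one_sub_inv {x : ℝ} (hx : 0 < x) :
    HasDerivAt (fun y : ℝ => ∑' j : ℕ, (((j : ℝ) + 1)⁻¹ - (y + j)⁻¹)) (hurwitzSeries 2 x) x := by
  obtain ⟨δ, hδ, hδ1, hδx⟩ : ∃ δ, 0 < δ ∧ δ < 1 ∧ δ < x :=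
    ⟨min x 1 / 2, by positivity, by linarith [min_le_right x 1], by linarith [min_le_left x 1]⟩
  have hpos : ∀ (j : ℕ) (y : ℝ), y ∈ Ioi δ → 0 < y + j := fun j y hy => by
    have : 0 < y := hδ.trans hy
    positivity
  have hterm : ∀ (j : ℕ) (y : ℝ), y ∈ Ioi δ →
      HasDerivAt (fun z : ℝ => ((j : ℝ) + 1)⁻¹ - (z + j)⁻¹) ((y + j) ^ 2)⁻¹ y := fun j y hy => by
    simpa using ((hasDerivAt_inv (hpos j y hy).ne').comp_add_const y (j : ℝ)).const_sub
      ((j : ℝ) + 1)⁻¹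
  have hbound : ∀ (j : ℕ) (y : ℝ), y ∈ Ioi δ → ‖((y + j) ^ 2)⁻¹‖ ≤ ((δ + j) ^ 2)⁻¹ :=
    fun j y hy => by
      rw [norm_inv, norm_pow, Real.norm_of_nonneg (hpos j y hy).le]
      have : δ ≤ y := le_of_lt hy
      gcongr
  exact hasDerivAt_tsum_of_isPreconnected (summable_inv_add_nat_pow δ one_lt_two) isOpen_Ioi
    isPreconnected_Ioi hterm hbound (y₀ := 1) hδ1 (by simp [add_comm]) hδx

theorem hasDerivAt_digamma {x : ℝ} (hx : 0 < x) : HasDerivAt digamma (hurwitzSeries 2 x) x :=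
  ((hasDerivAt_tsum_inv_add_one_sub_inv hx).const_add _).congr_of_eventuallyEq <|
    (eventually_gt_nhds hx).mono fun _ hy => digamma_eq_tsum hy

theorem hasDerivAt_polygamma (k : ℕ) {x : ℝ} (hx : 0 < x) :
    HasDerivAt (polygamma k) ((-1) ^ k * (k + 1).factorial * hurwitzSeries (k + 2) x) x := by
  induction k generalizing x with
  | zero => simpa [polygamma] using hasDerivAt_digamma hx
  | succ k ih =>
    have heq : polygamma (k + 1) =ᶠ[𝓝 x]
        fun y => (-1) ^ k * ((k + 1).factorial : ℝ) * hurwitzSeries (k + 2) y :=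
      (eventually_gt_nhds hx).mono fun y hy => by
        rw [polygamma, Function.iterate_succ_apply']
        exact (ih hy).deriv
    refine (((hasDerivAt_hurwitzSeries (by omega) hx).const_mul _).congr_of_eventuallyEq
      heq).congr_deriv ?_
    push_cast [Nat.factorial_succ]
    ring

theorem stmt_10 (a : ℝ) (ha : a ∈ Set.Ioo (0:ℝ) 1) (k : ℕ) (hk : Even k) :
    StrictAntiOn (fun y : ℝ =>
      polygamma k (y + a) - polygamma k y - a * (Nat.factorial k : ℝ) / y ^ (k + 1))
      (Set.Ioi 0) := by
  have hderiv : ∀ y ∈ Ioi (0 : ℝ), HasDerivAt (fun y : ℝ =>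
      polygamma k (y + a) - polygamma k y - a * (Nat.factorial k : ℝ) / y ^ (k + 1))
      ((k + 1).factorial * (hurwitzSeries (k + 2) (y + a) - hurwitzSeries (k + 2) y
        + a * (y ^ (k + 2))⁻¹)) y := fun y (hy : 0 < y) => by
    have hpow := (hasDerivAt_inv_pow (k + 1) hy.ne').const_mul (a * k.factorial)
    simp only [← div_eq_mul_inv] at hpow
    refine ((((hasDerivAt_polygamma k (add_pos hy ha.1)).comp_add_const y a).sub
      (hasDerivAt_polygamma k hy)).sub hpow).congr_deriv ?_
    rw [hk.neg_one_pow]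
    push_cast [Nat.factorial_succ]
    ring
  refine strictAntiOn_of_deriv_neg (convex_Ioi 0)
    (fun y hy => (hderiv y hy).continuousAt.continuousWithinAt) fun y hy => ?_
  rw [interior_Ioi] at hy
  rw [(hderiv y hy).deriv]
  have := mul_inv_pow_lt_hurwitzSeries_sub (m := k + 2) (by omega) hy ha
  exact mul_neg_of_pos_of_neg (by positivity) (by linarith)
end

section
/- For every x > 1, one has 1/x³ < ψ''(x + 1/2) - ψ''(x) < 1/x³ + 15 - 12·ζ(3). -/
open Real Filter Set Topology

local notation "γ" => eulerMascheroniConstant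

lemma summable_one_div_add_pow (a : ℝ) {p : ℕ} (hp : 1 < p) :
    Summable fun m : ℕ => 1 / (a + m) ^ p := by
  refine .of_norm (((Real.summable_one_div_nat_add_rpow a p).mpr (by exact_mod_cast hp)).congr
    fun m => ?_)
  simp [rpow_natCast, add_comm]

lemma hasDerivAt_one_div_pow (p : ℕ) {y : ℝ} (hy : y ≠ 0) :
    HasDerivAt (fun t : ℝ => 1 / t ^ p) (-p / y ^ (p + 1)) y := by
  have h := hasDerivAt_zpow (-p : ℤ) y (Or.inl hy)
  rw [show (-p : ℤ) - 1 = -(p + 1 : ℕ) by push_cast; ring, zpow_neg, zpow_natCast] at h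
  simpa [zpow_neg, div_eq_mul_inv] using h

lemma strictConvexOn_one_div_pow {p : ℕ} (hp : p ≠ 0) :
    StrictConvexOn ℝ (Ioi 0) fun t : ℝ => 1 / t ^ p := by
  convert strictConvexOn_zpow (m := -p) (by simpa) (by omega) using 2 with t
  simp

lemma hasSum_one_div_nat_pow_riemannZeta {p : ℕ} (hp : 1 < p) :
    HasSum (fun n : ℕ => 1 / (n : ℝ) ^ p) (riemannZeta p).re := by
  convert (Real.summable_one_div_nat_pow.mpr hp).hasSum
  rw [zeta_nat_eq_tsum_of_gt_one hp, ← Complex.ofReal_re (∑' n : ℕ, 1 / (n : ℝ) ^ p),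
    Complex.ofReal_tsum]
  push_cast
  rfl

-- The Hurwitz zeta function `ζ(p, x)`, for natural exponents.
noncomputable def shiftedZeta (p : ℕ) (x : ℝ) : ℝ := ∑' m : ℕ, 1 / (x + m) ^ p

lemma shiftedZeta_eq_one_div_pow_add {p : ℕ} (hp : 1 < p) (x : ℝ) :
    shiftedZeta p x = 1 / x ^ p + shiftedZeta p (x + 1) := by
  rw [shiftedZeta, (summable_one_div_add_pow x hp).tsum_eq_zero_add, shiftedZeta]
  simp [add_assoc, add_comm (1 : ℝ)]

lemma shiftedZeta_one {p : ℕ} (hp : 1 < p) : shiftedZeta p 1 = (riemannZeta p).re := by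
  have h := (hasSum_one_div_nat_pow_riemannZeta hp).tsum_eq
  rw [(Real.summable_one_div_nat_pow.mpr hp).tsum_eq_zero_add] at h
  simpa [shiftedZeta, add_comm, zero_pow (by omega : p ≠ 0)] using h

lemma shiftedZeta_one_half {p : ℕ} (hp : 1 < p) :
    shiftedZeta p (1 / 2) = (2 ^ p - 1) * (riemannZeta p).re := by
  set z := (riemannZeta p).re
  have hz := hasSum_one_div_nat_pow_riemannZeta hp
  have heven : HasSum (fun k : ℕ => 1 / ((2 * k : ℕ) : ℝ) ^ p) (z / 2 ^ p) := by
    refine (hz.div_const (2 ^ p)).congr_fun fun k => ?_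
    push_cast
    rw [mul_pow]
    field_simp
  have hodd :
      HasSum (fun k : ℕ => 1 / ((2 * k + 1 : ℕ) : ℝ) ^ p) (shiftedZeta p (1 / 2) / 2 ^ p) := by
    refine ((summable_one_div_add_pow (1 / 2) hp).hasSum.div_const (2 ^ p)).congr_fun fun k => ?_
    push_cast
    rw [show (2 * k + 1 : ℝ) = 2 * (1 / 2 + k) by ring, mul_pow]
    field_simp
  have h := hz.unique (heven.even_add_odd hodd)
  field_simp at h
  linarith

lemma hasDerivAt_shiftedZeta {p : ℕ} (hp : 1 < p) {x : ℝ} (hx : 0 < x) :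
    HasDerivAt (shiftedZeta p) (-p * shiftedZeta (p + 1) x) x := by
  have hderiv (m : ℕ) (y : ℝ) (hy : y ∈ Ioi (x / 2)) :
      HasDerivAt (fun t : ℝ => 1 / (t + m) ^ p) (-p / (y + m) ^ (p + 1)) y := by
    have : 0 < y := by rw [mem_Ioi] at hy; linarith
    exact (hasDerivAt_one_div_pow p (by positivity)).comp_add_const y m
  have hbound (m : ℕ) (y : ℝ) (hy : y ∈ Ioi (x / 2)) :
      ‖-(p : ℝ) / (y + m) ^ (p + 1)‖ ≤ p * (1 / (x / 2 + m) ^ (p + 1)) := by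
    rw [mem_Ioi] at hy
    rw [norm_div, norm_neg, norm_pow, Real.norm_natCast,
      Real.norm_of_nonneg (by linarith [Nat.cast_nonneg (α := ℝ) m]), mul_one_div]
    gcongr
  have hx' : x ∈ Ioi (x / 2) := by rw [mem_Ioi]; linarith
  have h := hasDerivAt_tsum_of_isPreconnected
    ((summable_one_div_add_pow (x / 2) (by omega : 1 < p + 1)).mul_left (p : ℝ)) isOpen_Ioi
    isPreconnected_Ioi hderiv hbound hx' (summable_one_div_add_pow x hp) hx'
  simp only [← mul_one_div (-(p : ℝ)), tsum_mul_left] at h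
  exact h

def secondDiff (h : ℝ) (f : ℝ → ℝ) (y : ℝ) : ℝ := f y - 2 * f (y + h) + f (y + 2 * h)

lemma StrictConvexOn.secondDiff_pos {s : Set ℝ} {f : ℝ → ℝ} (hf : StrictConvexOn ℝ s f)
    {h y : ℝ} (hh : h ≠ 0) (hy : y ∈ s) (hy' : y + 2 * h ∈ s) : 0 < secondDiff h f y := by
  have hmid := hf.2 hy hy' (by simpa using hh) (one_half_pos (α := ℝ)) one_half_pos
    (add_halves 1)
  simp only [smul_eq_mul] at hmid
  rw [show 1 / 2 * y + 1 / 2 * (y + 2 * h) = y + h by ring] at hmid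
  unfold secondDiff
  linarith

lemma HasDerivAt.secondDiff {f f' : ℝ → ℝ} {h y : ℝ} (h₀ : HasDerivAt f (f' y) y)
    (h₁ : HasDerivAt f (f' (y + h)) (y + h)) (h₂ : HasDerivAt f (f' (y + 2 * h)) (y + 2 * h)) :
    HasDerivAt (secondDiff h f) (secondDiff h f' y) y :=
  (h₀.sub ((h₁.comp_add_const y h).const_mul 2)).add (h₂.comp_add_const y (2 * h))

lemma secondDiff_one_div_pow_pos {p : ℕ} (hp : p ≠ 0) {h y : ℝ} (hh : 0 < h) (hy : 0 < y) :
    0 < secondDiff h (fun t => 1 / t ^ p) y :=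
  (strictConvexOn_one_div_pow hp).secondDiff_pos hh.ne' hy (show 0 < y + 2 * h by positivity)

lemma strictAntiOn_secondDiff_one_div_pow {p : ℕ} (hp : p ≠ 0) {h : ℝ} (hh : 0 < h) :
    StrictAntiOn (secondDiff h fun t => 1 / t ^ p) (Ioi 0) := by
  have hderiv : ∀ y : ℝ, 0 < y → HasDerivAt (secondDiff h fun t => 1 / t ^ p)
      (secondDiff h (fun t => -p / t ^ (p + 1)) y) y := fun y hy =>
    HasDerivAt.secondDiff (hasDerivAt_one_div_pow p hy.ne')
      (hasDerivAt_one_div_pow p (by positivity)) (hasDerivAt_one_div_pow p (by positivity))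
  refine strictAntiOn_of_hasDerivWithinAt_neg (convex_Ioi 0)
    (fun y hy => (hderiv y hy).continuousAt.continuousWithinAt)
    (fun y hy => (hderiv y (interior_subset hy)).hasDerivWithinAt) fun y hy => ?_
  have hpos := secondDiff_one_div_pow_pos (Nat.succ_ne_zero p) hh (interior_subset hy)
  have : secondDiff h (fun t => -p / t ^ (p + 1)) y
      = -p * secondDiff h (fun t => 1 / t ^ (p + 1)) y := by
    simp only [secondDiff]; ring
  rw [this]
  exact mul_neg_of_neg_of_pos (by simpa [Nat.pos_iff_ne_zero] using hp) hpos

lemma hasSum_secondDiff_one_div_pow {p : ℕ} (hp : 1 < p) (h x : ℝ) :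
    HasSum (fun m : ℕ => secondDiff h (fun t => 1 / t ^ p) (x + m))
      (secondDiff h (shiftedZeta p) x) := by
  have hS (a : ℝ) : HasSum (fun m : ℕ => 1 / (a + m) ^ p) (shiftedZeta p a) :=
    (summable_one_div_add_pow a hp).hasSum
  refine (((hS x).sub ((hS (x + h)).mul_left 2)).add (hS (x + 2 * h))).congr_fun fun m => ?_
  simp only [secondDiff]
  ring_nf

lemma secondDiff_shiftedZeta_pos {p : ℕ} (hp : 1 < p) {h x : ℝ} (hh : 0 < h) (hx : 0 < x) :
    0 < secondDiff h (shiftedZeta p) x :=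
  hasSum_lt (f := 0) (i := 0)
    (fun m => (secondDiff_one_div_pow_pos (by omega) hh (by positivity)).le)
    (by simpa using secondDiff_one_div_pow_pos (by omega) hh hx)
    hasSum_zero (hasSum_secondDiff_one_div_pow hp h x)

lemma strictAntiOn_secondDiff_shiftedZeta {p : ℕ} (hp : 1 < p) {h : ℝ} (hh : 0 < h) :
    StrictAntiOn (secondDiff h (shiftedZeta p)) (Ioi 0) := by
  intro x (hx : 0 < x) y (hy : 0 < y) hxy
  have hanti := strictAntiOn_secondDiff_one_div_pow (by omega : p ≠ 0) hh
  refine hasSum_lt (i := 0) (fun m => ?_) (by simpa using hanti hx hy hxy)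
    (hasSum_secondDiff_one_div_pow hp h y) (hasSum_secondDiff_one_div_pow hp h x)
  exact (hanti (show 0 < x + m by positivity) (show 0 < y + m by positivity) (by linarith)).le

lemma secondDiff_shiftedZeta_three_one :
    secondDiff (1 / 2) (shiftedZeta 3) 1 = 15 - 12 * (riemannZeta 3).re := by
  have h₁ := shiftedZeta_one (p := 3) (by norm_num)
  have h₂ := shiftedZeta_eq_one_div_pow_add (p := 3) (by norm_num) 1
  have h₃ := shiftedZeta_eq_one_div_pow_add (p := 3) (by norm_num) (1 / 2)
  rw [shiftedZeta_one_half (by norm_num)] at h₃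
  norm_num [secondDiff] at h₁ h₂ h₃ ⊢
  linarith

lemma tendsto_log_sub_harmonic_succ :
    Tendsto (fun n : ℕ => log n - harmonic (n + 1)) atTop (𝓝 (-γ)) := by
  have h := tendsto_harmonic_sub_log.neg.sub tendsto_one_div_add_atTop_nhds_zero_nat
  rw [sub_zero] at h
  refine h.congr fun n => ?_
  rw [harmonic_succ]
  push_cast
  ring

lemma hasDerivAt_logGammaSeq_s14 (n : ℕ) {y : ℝ} (hy : 0 < y) :
    HasDerivAt (BohrMollerup.logGammaSeq · n)
      (log n - ∑ m ∈ Finset.range (n + 1), 1 / (y + m)) y := by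
  have hlog (m : ℕ) (_ : m ∈ Finset.range (n + 1)) :
      HasDerivAt (fun t => log (t + m)) (1 / (y + m)) y := by
    simpa using ((hasDerivAt_id y).add_const (m : ℝ)).log (by positivity)
  have h := (((hasDerivAt_id' y).mul_const (log n)).add_const (log n.factorial)).fun_sub
    (HasDerivAt.fun_sum hlog)
  rw [one_mul] at h
  exact h

noncomputable def digammaSeries (x : ℝ) : ℝ :=
  -γ + ∑' m : ℕ, (1 / ((m : ℝ) + 1) - 1 / (x + m))

lemma hasDerivAt_log_Gamma {x : ℝ} (hx : 0 < x) :
    HasDerivAt (fun y => log (Gamma y)) (digammaSeries x) x := by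
  set a := min (1 / 2) (x / 2)
  have ha : 0 < a := lt_min one_half_pos (half_pos hx)
  have hterm (m : ℕ) (y : ℝ) (hy : y ∈ Ioo a (x + 1)) :
      ‖1 / ((m : ℝ) + 1) - 1 / (y + m)‖ ≤ (x + 1) * (1 / (a + m) ^ 2) := by
    obtain ⟨hay, hyx⟩ := hy
    have hy0 : 0 < y := ha.trans hay
    have hm : a + m ≤ m + 1 := by linarith [min_le_left (1 / 2 : ℝ) (x / 2)]
    rw [show 1 / ((m : ℝ) + 1) - 1 / (y + m) = (y - 1) / ((m + 1) * (y + m)) by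
      field_simp; ring, norm_div, Real.norm_eq_abs, Real.norm_of_nonneg (by positivity),
      mul_one_div, sq]
    exact div_le_div₀ (by linarith) (abs_le.mpr ⟨by linarith, by linarith⟩) (by positivity)
      (mul_le_mul hm (by linarith) (by positivity) (by positivity))
  have hsum : TendstoUniformlyOn
      (fun n y => ∑ m ∈ Finset.range (n + 1), (1 / ((m : ℝ) + 1) - 1 / (y + m)))
      (fun y => ∑' m : ℕ, (1 / ((m : ℝ) + 1) - 1 / (y + m))) atTop (Ioo a (x + 1)) :=
    fun u hu => (tendsto_add_atTop_nat 1).eventually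
      (tendstoUniformlyOn_tsum_nat ((summable_one_div_add_pow a one_lt_two).mul_left _) hterm u hu)
  have hderiv := (tendsto_log_sub_harmonic_succ.tendstoUniformlyOn_const _).add hsum
  refine hasDerivAt_of_tendstoUniformlyOn isOpen_Ioo (hderiv.congr (.of_forall fun n y _ => ?_))
    (.of_forall fun n y hy => hasDerivAt_logGammaSeq_s14 n (ha.trans hy.1))
    (fun y hy => BohrMollerup.tendsto_log_gamma (ha.trans hy.1))
    ⟨min_lt_of_right_lt (half_lt_self hx), lt_add_one x⟩
  simp only [Pi.add_apply, Finset.sum_sub_distrib, harmonic, one_div]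
  push_cast
  ring

lemma hasDerivAt_digammaSeries {x : ℝ} (hx : 0 < x) :
    HasDerivAt digammaSeries (shiftedZeta 2 x) x := by
  -- The domain `Ioi a` contains `1`, where every term vanishes, so the series converges there.
  set a := min (1 / 2) (x / 2)
  have ha : 0 < a := lt_min one_half_pos (half_pos hx)
  have hderiv (m : ℕ) (y : ℝ) (hy : y ∈ Ioi a) :
      HasDerivAt (fun t => 1 / ((m : ℝ) + 1) - 1 / (t + m)) (1 / (y + m) ^ 2) y := by
    have : 0 < y := ha.trans hy
    have h := ((hasDerivAt_one_div_pow 1 (by positivity)).comp_add_const y m).const_sub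
      (1 / ((m : ℝ) + 1))
    simp only [neg_div, neg_neg, pow_one, Nat.cast_one] at h
    exact h
  have hbound (m : ℕ) (y : ℝ) (hy : y ∈ Ioi a) : ‖1 / (y + m) ^ 2‖ ≤ 1 / (a + m) ^ 2 := by
    have hay : a < y := hy
    have : 0 < y := ha.trans hay
    rw [Real.norm_of_nonneg (by positivity)]
    gcongr
  have h := hasDerivAt_tsum_of_isPreconnected (summable_one_div_add_pow a one_lt_two) isOpen_Ioi
    isPreconnected_Ioi hderiv hbound (show a < 1 from min_lt_of_left_lt one_half_lt_one)
    (by simp [add_comm]) (show a < x from min_lt_of_right_lt (half_lt_self hx))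
  exact h.const_add (-γ)

lemma eqOn_digamma : EqOn digamma digammaSeries (Ioi 0) := fun _ hx =>
  (hasDerivAt_log_Gamma hx).deriv

lemma eqOn_deriv_digamma : EqOn (deriv digamma) (shiftedZeta 2) (Ioi 0) := fun _ hx => by
  rw [(eqOn_digamma.eventuallyEq_of_mem (Ioi_mem_nhds hx)).deriv_eq,
    (hasDerivAt_digammaSeries hx).deriv]

lemma iterate_deriv_digamma_two {x : ℝ} (hx : 0 < x) :
    deriv^[2] digamma x = -2 * shiftedZeta 3 x := by
  rw [Function.iterate_succ_apply', Function.iterate_one,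
    (eqOn_deriv_digamma.eventuallyEq_of_mem (Ioi_mem_nhds hx)).deriv_eq,
    (hasDerivAt_shiftedZeta one_lt_two hx).deriv]
  norm_num

theorem stmt_14 (x : ℝ) (hx : 1 < x) :
    1 / x ^ 3 < deriv^[2] digamma (x + 1/2) - deriv^[2] digamma x ∧
    deriv^[2] digamma (x + 1/2) - deriv^[2] digamma x <
      1 / x ^ 3 + 15 - 12 * (riemannZeta 3).re := by
  have hx₀ : 0 < x := by linarith
  have hψ : deriv^[2] digamma (x + 1/2) - deriv^[2] digamma x =
      1 / x ^ 3 + secondDiff (1 / 2) (shiftedZeta 3) x := by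
    rw [iterate_deriv_digamma_two (by positivity), iterate_deriv_digamma_two hx₀, secondDiff,
      shiftedZeta_eq_one_div_pow_add (by norm_num) x]
    ring_nf
  have hlt := strictAntiOn_secondDiff_shiftedZeta (p := 3) (by norm_num) one_half_pos
    (mem_Ioi.2 one_pos) (mem_Ioi.2 hx₀) hx
  rw [secondDiff_shiftedZeta_three_one] at hlt
  rw [hψ]
  exact ⟨lt_add_of_pos_right _ (secondDiff_shiftedZeta_pos (by norm_num) one_half_pos hx₀),
    by linarith⟩
end
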